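/- In the setting of the two reduction orders of R·S·T (S·T = A·B, R·A = C·D, R·S = G·H, H·T = I·J, G·I = K·L), prove that C_3 = K_3 = min(t_1, s_2, r_3), where lowercase letters are the components of the rows and capital letters denote partial sums. -/

import Mathlib

/-!
The partial sums of a bumped row satisfy `X_1 = 0`, `X_2 = min(z_1, w_2)` and
`X_3 = min(Z_2, X_2 + w_3)`. Since `A` and `I` are themselves bumped rows, `a_1 = i_1 = 0`, hence
`C_3 = min(A_2, r_3) = min(t_1, s_2, r_3)` and `K_3 = min(I_2, g_3) = min(t_1, h_2, g_3)`. The latter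
collapses to the former because the first insertion `R·S = G·H` gives `min(h_2, g_3) = min(s_2, r_3)`.
-/

open Finset

/-- Partial sum `Φ_p = φ_1 + ⋯ + φ_p` of a multiplicity vector. -/
def PS (f : ℕ → ℕ) (p : ℕ) : ℕ := ∑ i ∈ Finset.Icc 1 p, f i

/-- Partial sums `X_p` of the bumped row in the vector insertion `W·Z = X·Y`:
`X_0 = X_1 = 0`, `X_{p+1} = min(Z_p, X_p + w_{p+1})`. -/
def capX (W Z : ℕ → ℕ) : ℕ → ℕ
  | 0 => 0
  | p + 1 => if p = 0 then 0 else min (PS Z p) (capX W Z p + W (p + 1))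

/-- Component `x_p = X_p - X_{p-1} = min(Z_{p-1} - X_{p-1}, w_p)` (with `x_1 = 0`). -/
def xcomp (W Z : ℕ → ℕ) (p : ℕ) : ℕ := capX W Z p - capX W Z (p - 1)

/-- Component `y_q = w_q + z_q - x_q`. -/
def ycomp (W Z : ℕ → ℕ) (q : ℕ) : ℕ := W q + Z q - xcomp W Z q

/-- `A` from `S·T = A·B`. -/
def rowA (S T : ℕ → ℕ) : ℕ → ℕ := xcomp S T
/-- `B` from `S·T = A·B`. -/
def rowB (S T : ℕ → ℕ) : ℕ → ℕ := ycomp S T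
/-- `C` from `R·A = C·D`. -/
def rowC (R S T : ℕ → ℕ) : ℕ → ℕ := xcomp R (rowA S T)
/-- `D` from `R·A = C·D`. -/
def rowD (R S T : ℕ → ℕ) : ℕ → ℕ := ycomp R (rowA S T)
/-- `E` from `D·B = E·F`. -/
def rowE (R S T : ℕ → ℕ) : ℕ → ℕ := xcomp (rowD R S T) (rowB S T)
/-- `F` from `D·B = E·F`. -/
def rowF (R S T : ℕ → ℕ) : ℕ → ℕ := ycomp (rowD R S T) (rowB S T)
/-- `G` from `R·S = G·H`. -/
def rowG (R S : ℕ → ℕ) : ℕ → ℕ := xcomp R S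
/-- `H` from `R·S = G·H`. -/
def rowH (R S : ℕ → ℕ) : ℕ → ℕ := ycomp R S
/-- `I` from `H·T = I·J`. -/
def rowI (R S T : ℕ → ℕ) : ℕ → ℕ := xcomp (rowH R S) T
/-- `J` from `H·T = I·J`. -/
def rowJ (R S T : ℕ → ℕ) : ℕ → ℕ := ycomp (rowH R S) T
/-- `K` from `G·I = K·L`. -/
def rowK (R S T : ℕ → ℕ) : ℕ → ℕ := xcomp (rowG R S) (rowI R S T)
/-- `L` from `G·I = K·L`. -/
def rowL (R S T : ℕ → ℕ) : ℕ → ℕ := ycomp (rowG R S) (rowI R S T)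

lemma PS_zero (f : ℕ → ℕ) : PS f 0 = 0 := rfl

lemma PS_succ (f : ℕ → ℕ) (p : ℕ) : PS f (p + 1) = PS f p + f (p + 1) :=
  Finset.sum_Icc_succ_top (by omega) f

lemma PS_one (f : ℕ → ℕ) : PS f 1 = f 1 := by
  rw [PS_succ, PS_zero, zero_add]

section VectorInsertion

variable (W Z : ℕ → ℕ)

lemma capX_one : capX W Z 1 = 0 := rfl

lemma capX_add_two (p : ℕ) :
    capX W Z (p + 2) = min (PS Z (p + 1)) (capX W Z (p + 1) + W (p + 2)) :=
  if_neg p.succ_ne_zero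

lemma capX_two : capX W Z 2 = min (Z 1) (W 2) := by
  simp only [capX_add_two W Z 0, capX_one, PS_one, zero_add]

lemma capX_succ_le_PS (p : ℕ) : capX W Z (p + 1) ≤ PS Z p := by
  rcases p with _ | p
  · exact (capX_one W Z).le
  · exact (capX_add_two W Z p).trans_le (min_le_left _ _)

lemma capX_le_capX_succ (p : ℕ) : capX W Z p ≤ capX W Z (p + 1) := by
  rcases p with _ | _ | p
  · exact Nat.zero_le _
  · exact Nat.zero_le _
  · rw [capX_add_two]
    have hPS : capX W Z (p + 2) ≤ PS Z (p + 2) :=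
      (capX_succ_le_PS W Z (p + 1)).trans (PS_succ Z (p + 1) ▸ Nat.le_add_right _ _)
    exact le_min hPS (Nat.le_add_right _ _)

/-- `capX` is monotone, so the truncated differences `xcomp` telescope. -/
lemma PS_xcomp (p : ℕ) : PS (xcomp W Z) p = capX W Z p := by
  induction p with
  | zero => rfl
  | succ p ih =>
    rw [PS_succ, ih, xcomp, Nat.add_sub_cancel]
    have := capX_le_capX_succ W Z p
    omega

lemma xcomp_one : xcomp W Z 1 = 0 := rfl

lemma capX_three_of_one_eq_zero (hZ : Z 1 = 0) : capX W Z 3 = min (PS Z 2) (W 3) := by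
  rw [capX_add_two, capX_two, hZ, Nat.zero_min, zero_add]

/-- With `m = min(z_1, w_2)` one has `y_2 = w_2 + z_2 - m` and `x_3 = min(z_1 + z_2 - m, w_3)`,
and `min(w_2, z_1) - m = 0`. -/
lemma min_ycomp_two_xcomp_three : min (ycomp W Z 2) (xcomp W Z 3) = min (Z 2) (W 3) := by
  have h3 : capX W Z 3 = min (Z 1 + Z 2) (capX W Z 2 + W 3) := by
    rw [capX_add_two, PS_succ, PS_one]
  show min (W 2 + Z 2 - (capX W Z 2 - capX W Z 1)) (capX W Z 3 - capX W Z 2) = _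
  rw [h3, capX_two, capX_one]
  omega

end VectorInsertion

theorem C3_eq_K3_general (R S T : ℕ → ℕ) :
    PS (rowC R S T) 3 = PS (rowK R S T) 3 ∧
    PS (rowC R S T) 3 = min (T 1) (min (S 2) (R 3)) := by
  have hC : PS (rowC R S T) 3 = min (T 1) (min (S 2) (R 3)) := by
    rw [rowC, PS_xcomp, rowA, capX_three_of_one_eq_zero _ _ (xcomp_one S T), PS_xcomp, capX_two,
      min_assoc]
  have hK : PS (rowK R S T) 3 = min (T 1) (min (S 2) (R 3)) := by
    rw [rowK, PS_xcomp, rowI, capX_three_of_one_eq_zero _ _ (xcomp_one _ T), PS_xcomp, capX_two,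
      min_assoc, rowH, rowG, min_ycomp_two_xcomp_three]
  exact ⟨hC.trans hK.symm, hC⟩

/-- `C_3 = K_3 = min(t_1, s_2, r_3)`. -/
theorem C3_eq_K3 (n : ℕ) (hn : 3 ≤ n) (R S T : ℕ → ℕ) :
    PS (rowC R S T) 3 = PS (rowK R S T) 3 ∧
    PS (rowC R S T) 3 = min (T 1) (min (S 2) (R 3)) :=
  C3_eq_K3_general R S T
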